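/- arXiv:0802.1192 — 2 statements merged into one kernel-verified Lean document; each statement's English description precedes it below -/
import Mathlib

section
/- Let α > 0 and let (α_N) be a non-increasing real sequence with α_N ↓ α and (α_N − α) log N → 0, and let (β_N) be a real sequence with β_N → β > 0. Then lim_{N→∞} N^{-α_N} Σ_{k=0}^{N} (Γ(α_N + k)/k!) (1 − β_N/N)^k = β^{-α} Γ(α,β). -/
open MeasureTheory Real Filter Finset

/-- Lower incomplete gamma function `Γ(a,b) = ∫_0^b s^(a-1) e^(-s) ds`. -/
noncomputable def lGamma (a b : ℝ) : ℝ := ∫ s in (0:ℝ)..b, s ^ (a - 1) * Real.exp (-s)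

/-!
Writing `Γ(c + k)` as a Gamma integral and substituting `s = N t` gives
`N^(-c) ∑_{k ≤ N} Γ(c + k) / k! x^k = ∫_0^∞ t^(c-1) e^(-N t) e_N(x N t) dt`, where `e_N` is the
degree-`N` Taylor polynomial of `exp`. For `x = 1 - b / N` the kernel `e^(-N t) e_N((N - b) t)` is
`e^(-b t)` times the probability that a Poisson variable of mean `(N - b) t` is at most `N`.
Chernoff bounds show that it tends to `e^(-β t)` for `t < 1` and to `0` for `t > 1`, at the
geometric rate `(t e^(1-t))^N`, so dominated convergence turns the sum into
`∫_0^1 t^(α-1) e^(-β t) dt = β^(-α) Γ(α, β)`.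
-/

open scoped Nat Topology

noncomputable def truncExp (N : ℕ) (y : ℝ) : ℝ := ∑ k ∈ range (N + 1), y ^ k / k !

lemma hasSum_pow_div_factorial_exp (y : ℝ) : HasSum (fun k => y ^ k / k !) (exp y) := by
  rw [exp_eq_exp_ℝ]
  exact NormedSpace.expSeries_div_hasSum_exp y

lemma continuous_truncExp (N : ℕ) : Continuous (truncExp N) :=
  continuous_finsetSum _ fun k _ => (continuous_pow k).div_const _

section TruncExp

variable {N : ℕ} {y : ℝ}

lemma truncExp_nonneg (hy : 0 ≤ y) : 0 ≤ truncExp N y :=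
  sum_nonneg fun _ _ => by positivity

lemma truncExp_le_exp (hy : 0 ≤ y) : truncExp N y ≤ exp y :=
  sum_le_exp_of_nonneg hy _

lemma pow_mul_truncExp_le_exp {l : ℝ} (hl₀ : 0 ≤ l) (hl₁ : l ≤ 1) (hy : 0 ≤ y) :
    l ^ N * truncExp N y ≤ exp (l * y) :=
  calc l ^ N * truncExp N y ≤ truncExp N (l * y) := by
        rw [truncExp, truncExp, mul_sum]
        gcongr with k hk
        rw [mul_pow, mul_div_assoc]
        exact mul_le_mul_of_nonneg_right
          (pow_le_pow_of_le_one hl₀ hl₁ (Nat.lt_succ_iff.mp (mem_range.mp hk))) (by positivity)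
    _ ≤ exp (l * y) := truncExp_le_exp (mul_nonneg hl₀ hy)

lemma pow_mul_exp_sub_truncExp_le {l : ℝ} (hl : 1 ≤ l) (hy : 0 ≤ y) :
    l ^ (N + 1) * (exp y - truncExp N y) ≤ exp (l * y) := by
  have hly : 0 ≤ l * y := mul_nonneg (zero_le_one.trans hl) hy
  have tail (z : ℝ) : HasSum (fun k => z ^ (k + (N + 1)) / (k + (N + 1)) !)
      (exp z - truncExp N z) :=
    (hasSum_nat_add_iff' (N + 1)).2 (hasSum_pow_div_factorial_exp z)
  calc l ^ (N + 1) * (exp y - truncExp N y) ≤ exp (l * y) - truncExp N (l * y) := by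
        refine hasSum_le (fun k => ?_) ((tail y).mul_left _) (tail (l * y))
        rw [mul_pow, ← mul_div_assoc]
        have hk : l ^ (N + 1) ≤ l ^ (k + (N + 1)) := pow_le_pow_right₀ hl (by omega)
        gcongr
    _ ≤ exp (l * y) := sub_le_self _ (truncExp_nonneg hly)

end TruncExp

section Kernel

variable {N : ℕ} {b t : ℝ}

lemma mul_exp_one_sub_lt_one (ht : t ≠ 1) : t * exp (1 - t) < 1 := by
  have h : t < exp (t - 1) := by linarith [add_one_lt_exp (sub_ne_zero.mpr ht)]
  calc t * exp (1 - t) < exp (t - 1) * exp (1 - t) := by gcongr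
    _ = 1 := by rw [← exp_add]; simp

lemma exp_neg_mul_mul_pow_mul_exp_sub :
    exp (-(N * t)) * (t ^ N * exp (N - b)) = (t * exp (1 - t)) ^ N * exp (-b) := by
  rw [mul_pow, ← exp_nat_mul, mul_assoc, ← exp_add, mul_left_comm, ← exp_add]
  ring_nf

lemma exp_neg_mul_truncExp_le (ht : 0 ≤ t) (hb : b ≤ N) :
    exp (-(N * t)) * truncExp N ((N - b) * t) ≤ exp (-(b * t)) :=
  calc exp (-(N * t)) * truncExp N ((N - b) * t)
      ≤ exp (-(N * t)) * exp ((N - b) * t) := by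
        gcongr
        exact truncExp_le_exp (mul_nonneg (sub_nonneg.mpr hb) ht)
    _ = exp (-(b * t)) := by rw [← exp_add]; ring_nf

lemma exp_neg_mul_truncExp_le_of_one_le (ht : 1 ≤ t) (hb : b ≤ N) :
    exp (-(N * t)) * truncExp N ((N - b) * t) ≤ (t * exp (1 - t)) ^ N * exp (-b) := by
  have ht₀ : 0 < t := zero_lt_one.trans_le ht
  have hchernoff := pow_mul_truncExp_le_exp (N := N) (inv_nonneg.mpr ht₀.le)
    (inv_le_one_of_one_le₀ ht) (mul_nonneg (sub_nonneg.mpr hb) ht₀.le)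
  rw [inv_pow, inv_mul_le_iff₀ (by positivity), inv_mul_eq_div, mul_div_cancel_right₀ _ ht₀.ne']
    at hchernoff
  rw [← exp_neg_mul_mul_pow_mul_exp_sub]
  gcongr

lemma exp_neg_mul_sub_le_exp_neg_mul_truncExp (ht₀ : 0 < t) (ht₁ : t ≤ 1) (hb : b ≤ N) :
    exp (-(b * t)) - t * (t * exp (1 - t)) ^ N * exp (-b) ≤
      exp (-(N * t)) * truncExp N ((N - b) * t) := by
  have hchernoff := pow_mul_exp_sub_truncExp_le (N := N) (one_le_inv₀ ht₀ |>.mpr ht₁)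
    (mul_nonneg (sub_nonneg.mpr hb) ht₀.le)
  rw [inv_pow, inv_mul_le_iff₀ (by positivity), inv_mul_eq_div, mul_div_cancel_right₀ _ ht₀.ne']
    at hchernoff
  have htail : exp (-(N * t)) * (exp ((N - b) * t) - truncExp N ((N - b) * t)) ≤
      t * (t * exp (1 - t)) ^ N * exp (-b) :=
    calc _ ≤ exp (-(N * t)) * (t ^ (N + 1) * exp (N - b)) := by gcongr
      _ = _ := by
        rw [pow_succ', mul_assoc t, mul_left_comm, exp_neg_mul_mul_pow_mul_exp_sub, mul_assoc]
  have hsplit : exp (-(b * t)) = exp (-(N * t)) * exp ((N - b) * t) := by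
    rw [← exp_add]; ring_nf
  rw [hsplit]
  linarith [mul_sub (exp (-(N * t))) (exp ((N - b) * t)) (truncExp N ((N - b) * t))]

end Kernel

lemma Filter.Tendsto.eventually_le_natCast {b : ℕ → ℝ} {β : ℝ} (hb : Tendsto b atTop (𝓝 β)) :
    ∀ᶠ N : ℕ in atTop, b N ≤ N := by
  filter_upwards [hb.eventually (eventually_lt_nhds (lt_add_one β)),
    tendsto_natCast_atTop_atTop.eventually_ge_atTop (β + 1)] with N hbN hN
  linarith

lemma tendsto_pow_mul_exp_one_sub {t : ℝ} (ht₀ : 0 ≤ t) (ht₁ : t ≠ 1) :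
    Tendsto (fun N : ℕ => (t * exp (1 - t)) ^ N) atTop (𝓝 0) :=
  tendsto_pow_atTop_nhds_zero_of_lt_one (by positivity) (mul_exp_one_sub_lt_one ht₁)

section KernelLimit

variable {b : ℕ → ℝ} {β t : ℝ}

lemma tendsto_exp_neg_mul_truncExp_of_lt_one (hb : Tendsto b atTop (𝓝 β)) (ht₀ : 0 < t)
    (ht₁ : t < 1) :
    Tendsto (fun N : ℕ => exp (-(N * t)) * truncExp N ((N - b N) * t)) atTop
      (𝓝 (exp (-(β * t)))) := by
  have hupper : Tendsto (fun N => exp (-(b N * t))) atTop (𝓝 (exp (-(β * t)))) :=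
    ((hb.mul_const t).neg).rexp
  have hlower : Tendsto (fun N => exp (-(b N * t)) - t * (t * exp (1 - t)) ^ N * exp (-b N))
      atTop (𝓝 (exp (-(β * t)))) := by
    simpa using hupper.sub
      (((tendsto_pow_mul_exp_one_sub ht₀.le ht₁.ne).const_mul t).mul hb.neg.rexp)
  refine tendsto_of_tendsto_of_tendsto_of_le_of_le' hlower hupper ?_ ?_ <;>
    filter_upwards [hb.eventually_le_natCast] with N hbN
  exacts [exp_neg_mul_sub_le_exp_neg_mul_truncExp ht₀ ht₁.le hbN,
    exp_neg_mul_truncExp_le ht₀.le hbN]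

lemma tendsto_exp_neg_mul_truncExp_of_one_lt (hb : Tendsto b atTop (𝓝 β)) (ht : 1 < t) :
    Tendsto (fun N : ℕ => exp (-(N * t)) * truncExp N ((N - b N) * t)) atTop (𝓝 0) := by
  have hupper : Tendsto (fun N => (t * exp (1 - t)) ^ N * exp (-b N)) atTop (𝓝 0) := by
    simpa using (tendsto_pow_mul_exp_one_sub (zero_le_one.trans ht.le) ht.ne').mul hb.neg.rexp
  refine tendsto_of_tendsto_of_tendsto_of_le_of_le' tendsto_const_nhds hupper ?_ ?_ <;>
    filter_upwards [hb.eventually_le_natCast] with N hbN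
  exacts [mul_nonneg (exp_nonneg _)
      (truncExp_nonneg (mul_nonneg (sub_nonneg.mpr hbN) (by linarith))),
    exp_neg_mul_truncExp_le_of_one_le ht.le hbN]

lemma tendsto_exp_neg_mul_truncExp (hb : Tendsto b atTop (𝓝 β)) (ht₀ : 0 < t) (ht₁ : t ≠ 1) :
    Tendsto (fun N : ℕ => exp (-(N * t)) * truncExp N ((N - b N) * t)) atTop
      (𝓝 ((Set.Iic 1).indicator (fun t => exp (-(β * t))) t)) := by
  rcases ht₁.lt_or_gt with ht₁ | ht₁
  · rw [Set.indicator_of_mem (Set.mem_Iic.mpr ht₁.le)]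
    exact tendsto_exp_neg_mul_truncExp_of_lt_one hb ht₀ ht₁
  · rw [Set.indicator_of_notMem (Set.notMem_Iic.mpr ht₁)]
    exact tendsto_exp_neg_mul_truncExp_of_one_lt hb ht₁

end KernelLimit

lemma sum_Gamma_div_factorial_mul_pow_eq_integral {c : ℝ} (hc : 0 < c) (x : ℝ) (N : ℕ) :
    ∑ k ∈ range (N + 1), Gamma (c + k) / k ! * x ^ k =
      ∫ s in Set.Ioi 0, s ^ (c - 1) * (exp (-s) * truncExp N (x * s)) :=
  calc ∑ k ∈ range (N + 1), Gamma (c + k) / k ! * x ^ k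
      = ∑ k ∈ range (N + 1), ∫ s in Set.Ioi 0, exp (-s) * s ^ (c + k - 1) * (x ^ k / k !) := by
        refine sum_congr rfl fun k _ => ?_
        rw [Gamma_eq_integral (by positivity), integral_mul_const]
        ring
    _ = ∫ s in Set.Ioi 0, ∑ k ∈ range (N + 1), exp (-s) * s ^ (c + k - 1) * (x ^ k / k !) :=
        (integral_finsetSum _ fun k _ =>
          (GammaIntegral_convergent (by positivity)).mul_const _).symm
    _ = ∫ s in Set.Ioi 0, s ^ (c - 1) * (exp (-s) * truncExp N (x * s)) := by
        refine setIntegral_congr_fun measurableSet_Ioi fun s (hs : 0 < s) => ?_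
        simp only [truncExp, mul_sum]
        refine sum_congr rfl fun k _ => ?_
        rw [add_sub_right_comm, rpow_add hs, rpow_natCast, mul_pow]
        ring

lemma integral_Ioi_rpow_mul_comp_mul (h : ℝ → ℝ) (c : ℝ) {l : ℝ} (hl : 0 < l) :
    ∫ s in Set.Ioi 0, s ^ (c - 1) * h s = l ^ c * ∫ t in Set.Ioi 0, t ^ (c - 1) * h (l * t) := by
  have hscale := integral_comp_mul_left_Ioi (fun s => s ^ (c - 1) * h s) 0 hl
  have hpow : ∫ t in Set.Ioi 0, (l * t) ^ (c - 1) * h (l * t) =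
      l ^ (c - 1) * ∫ t in Set.Ioi 0, t ^ (c - 1) * h (l * t) := by
    rw [← integral_const_mul]
    refine setIntegral_congr_fun measurableSet_Ioi fun t (ht : 0 < t) => ?_
    rw [mul_rpow hl.le ht.le, mul_assoc]
  rw [mul_zero, smul_eq_mul, hpow, rpow_sub_one hl.ne'] at hscale
  field_simp at hscale
  rw [← hscale]

lemma natCast_rpow_neg_mul_sum_Gamma_eq_integral {c : ℝ} (hc : 0 < c) (b : ℝ) {N : ℕ}
    (hN : N ≠ 0) :
    (N : ℝ) ^ (-c) * ∑ k ∈ range (N + 1), Gamma (c + k) / k ! * (1 - b / N) ^ k =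
      ∫ t in Set.Ioi 0, t ^ (c - 1) * (exp (-(N * t)) * truncExp N ((N - b) * t)) := by
  have hN' : (0 : ℝ) < N := by positivity
  rw [sum_Gamma_div_factorial_mul_pow_eq_integral hc, integral_Ioi_rpow_mul_comp_mul _ c hN',
    ← mul_assoc, ← rpow_add hN', neg_add_cancel, rpow_zero, one_mul]
  have hx (t : ℝ) : (1 - b / N) * (N * t) = (N - b) * t := by field_simp
  simp_rw [hx]

lemma lGamma_eq_integral_Ioi (a : ℝ) {b : ℝ} (hb : 0 ≤ b) :
    lGamma a b = ∫ s in Set.Ioi 0, s ^ (a - 1) * (Set.Iic b).indicator (fun s => exp (-s)) s := by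
  simp_rw [← Set.indicator_mul_right _ fun s => s ^ (a - 1)]
  rw [integral_indicator measurableSet_Iic, Measure.restrict_restrict measurableSet_Iic,
    Set.Iic_inter_Ioi, lGamma, intervalIntegral.integral_of_le hb]

lemma rpow_neg_mul_lGamma (α : ℝ) {β : ℝ} (hβ : 0 < β) :
    β ^ (-α) * lGamma α β =
      ∫ t in Set.Ioi 0, t ^ (α - 1) * (Set.Iic 1).indicator (fun t => exp (-(β * t))) t := by
  rw [lGamma_eq_integral_Ioi α hβ.le, integral_Ioi_rpow_mul_comp_mul _ α hβ, ← mul_assoc,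
    ← rpow_add hβ, neg_add_cancel, rpow_zero, one_mul]
  congr 1 with t
  simp only [Set.indicator, Set.mem_Iic, mul_le_iff_le_one_right hβ]

lemma rpow_le_rpow_add_rpow {t p q r : ℝ} (ht : 0 < t) (hpr : p ≤ r) (hrq : r ≤ q) :
    t ^ r ≤ t ^ p + t ^ q := by
  rcases le_total t 1 with h | h
  · linarith [rpow_le_rpow_of_exponent_ge ht h hpr, rpow_nonneg ht.le q]
  · linarith [rpow_le_rpow_of_exponent_le h hrq, rpow_nonneg ht.le p]

lemma integrableOn_rpow_mul_exp_neg_mul {s b : ℝ} (hs : -1 < s) (hb : 0 < b) :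
    IntegrableOn (fun t : ℝ => t ^ s * exp (-(b * t))) (Set.Ioi 0) := by
  simpa using integrableOn_rpow_mul_exp_neg_mul_rpow hs zero_lt_one hb

lemma tendsto_integral_rpow_mul_exp_neg_mul_truncExp {α β : ℝ} {a b : ℕ → ℝ} (hα : 0 < α)
    (hβ : 0 < β) (ha : Tendsto a atTop (𝓝 α)) (hb : Tendsto b atTop (𝓝 β)) :
    Tendsto (fun N : ℕ => ∫ t in Set.Ioi 0,
        t ^ (a N - 1) * (exp (-(N * t)) * truncExp N ((N - b N) * t))) atTop
      (𝓝 (∫ t in Set.Ioi 0, t ^ (α - 1) * (Set.Iic 1).indicator (fun t => exp (-(β * t))) t)) := by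
  refine tendsto_integral_filter_of_dominated_convergence
    (fun t => t ^ (α / 2 - 1) * exp (-(β / 2 * t)) + t ^ α * exp (-(β / 2 * t)))
    (Eventually.of_forall fun N => ?_) ?_ ?_ ?_
  · refine ContinuousOn.aestronglyMeasurable (ContinuousOn.mul ?_ ?_) measurableSet_Ioi
    · exact continuousOn_id.rpow_const fun t ht => Or.inl (ne_of_gt ht)
    · exact (Continuous.continuousOn (by fun_prop)).mul
        ((continuous_truncExp N).comp_continuousOn (by fun_prop))
  · filter_upwards [ha.eventually (Ioo_mem_nhds (half_lt_self hα) (lt_add_one α)),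
      hb.eventually (eventually_gt_nhds (half_lt_self hβ)), hb.eventually_le_natCast]
      with N haN hbN hbN'
    refine (ae_restrict_iff' measurableSet_Ioi).2 (Eventually.of_forall fun t (ht : 0 < t) => ?_)
    have hkernel : 0 ≤ exp (-(N * t)) * truncExp N ((N - b N) * t) :=
      mul_nonneg (exp_nonneg _) (truncExp_nonneg (mul_nonneg (sub_nonneg.2 hbN') ht.le))
    rw [norm_of_nonneg (mul_nonneg (rpow_nonneg ht.le _) hkernel), ← add_mul]
    refine mul_le_mul (rpow_le_rpow_add_rpow ht (by linarith [haN.1]) (by linarith [haN.2]))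
      ?_ hkernel (by positivity)
    refine (exp_neg_mul_truncExp_le ht.le hbN').trans (exp_le_exp.2 ?_)
    nlinarith
  · exact (integrableOn_rpow_mul_exp_neg_mul (by linarith) (by linarith)).add
      (integrableOn_rpow_mul_exp_neg_mul (by linarith) (by linarith))
  · filter_upwards [ae_restrict_mem measurableSet_Ioi, ae_restrict_of_ae (volume.ae_ne 1)]
      with t (ht₀ : 0 < t) ht₁
    exact (tendsto_const_nhds.rpow (ha.sub_const 1) (Or.inl ht₀.ne')).mul
      (tendsto_exp_neg_mul_truncExp hb ht₀ ht₁)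

theorem tendsto_sum_gamma_ratio_varying_general (α β : ℝ) (a β' : ℕ → ℝ)
    (hα : 0 < α) (hβ : 0 < β)
    (ha_lim : Tendsto a atTop (nhds α))
    (hβ' : Tendsto β' atTop (nhds β)) :
    Tendsto (fun N : ℕ => (N : ℝ) ^ (-(a N)) *
        ∑ k ∈ Finset.range (N + 1),
          Real.Gamma (a N + k) / (Nat.factorial k) * (1 - β' N / N) ^ k)
      atTop (nhds (β ^ (-α) * lGamma α β)) := by
  rw [rpow_neg_mul_lGamma α hβ]
  refine (tendsto_integral_rpow_mul_exp_neg_mul_truncExp hα hβ ha_lim hβ').congr' ?_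
  filter_upwards [ha_lim.eventually (eventually_gt_nhds hα), eventually_ne_atTop 0]
    with N haN hN
  exact (natCast_rpow_neg_mul_sum_Gamma_eq_integral haN _ hN).symm

/-- For a non-increasing sequence `α_N ↓ α > 0` with `(α_N - α) log N → 0` and `β_N → β > 0`,
`lim_N N^(-α_N) Σ_{k=0}^N (Γ(α_N+k)/k!) (1-β_N/N)^k = β^(-α) Γ(α,β)`. -/
theorem tendsto_sum_gamma_ratio_varying (α β : ℝ) (a β' : ℕ → ℝ)
    (hα : 0 < α) (hβ : 0 < β)
    (ha_anti : Antitone a) (ha_ge : ∀ N, α ≤ a N)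
    (ha_lim : Tendsto a atTop (nhds α))
    (ha_log : Tendsto (fun N : ℕ => (a N - α) * Real.log N) atTop (nhds 0))
    (hβ' : Tendsto β' atTop (nhds β)) :
    Tendsto (fun N : ℕ => (N : ℝ) ^ (-(a N)) *
        ∑ k ∈ Finset.range (N + 1),
          Real.Gamma (a N + k) / (Nat.factorial k) * (1 - β' N / N) ^ k)
      atTop (nhds (β ^ (-α) * lGamma α β)) :=
  tendsto_sum_gamma_ratio_varying_general α β a β' hα hβ ha_lim hβ'
end

section
/- Let b > a > 0 and suppose (μ_m)_{m≥0} is a real sequence with μ_0 = 1 satisfying μ_{m+1} = ((m+a)/b) μ_m − (m/b)·π for all m ≥ 0, where π = b^a/(b^a + Γ(a,b)(b−a)e^b). Then μ_m = E[Z^m] for all m, where Z has the Langmuir-incomplete gamma distribution LIG(a,b). In particular such a solution sequence is unique. -/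
open MeasureTheory Real Filter Finset

/-- The incomplete gamma distribution `IG(a,b,1)` with density
`Γ(a,b)⁻¹ b^a x^(a-1) e^(-bx)` on `(0,1)`. -/
noncomputable def igMeasure (a b : ℝ) : Measure ℝ :=
  (volume.restrict (Set.Ioo (0:ℝ) 1)).withDensity
    (fun x => ENNReal.ofReal ((lGamma a b)⁻¹ * b ^ a * x ^ (a - 1) * Real.exp (-(b * x))))

/-- The boundary atom mass `π_{a,b} = b^a / (b^a + Γ(a,b)(b-a)e^b)`. -/
noncomputable def ligPi (a b : ℝ) : ℝ :=
  b ^ a / (b ^ a + lGamma a b * (b - a) * Real.exp b)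

/-- The Langmuir-incomplete gamma distribution `LIG(a,b)`: the mixture
`(1-π_{a,b}) IG(a,b,1) + π_{a,b} δ_1`. -/
noncomputable def ligMeasure (a b : ℝ) : Measure ℝ :=
  ENNReal.ofReal (1 - ligPi a b) • igMeasure a b +
    ENNReal.ofReal (ligPi a b) • Measure.dirac 1

/-!
Substituting `s = b x` shows that the `m`-th moment of `IG(a,b,1)` is
`M_m = Γ(m+a,b) / (b^m Γ(a,b))`, so the recurrence `Γ(p+1,b) = p Γ(p,b) - b^p e^(-b)` gives
`M_(m+1) = ((m+a)/b) M_m - b^(a-1) e^(-b) / Γ(a,b)`. The moments `(1-π) M_m + π` of `LIG(a,b)`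
therefore satisfy the given recurrence precisely because `π` solves
`π (b-a) Γ(a,b) = (1-π) b^a e^(-b)`; as both sequences start at `1`, they agree by induction.
-/

lemma intervalIntegrable_rpow_mul {p : ℝ} (hp : -1 < p) {g : ℝ → ℝ} (hg : Continuous g)
    (s t : ℝ) : IntervalIntegrable (fun x => x ^ p * g x) volume s t :=
  (intervalIntegral.intervalIntegrable_rpow' hp).mul_continuousOn hg.continuousOn

lemma lGamma_nonneg (p : ℝ) {b : ℝ} (hb : 0 ≤ b) : 0 ≤ lGamma p b :=
  intervalIntegral.integral_nonneg hb fun x hx => by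
    have := Real.rpow_nonneg hx.1 (p - 1)
    positivity

lemma lGamma_pos {p b : ℝ} (hp : 0 < p) (hb : 0 < b) : 0 < lGamma p b :=
  intervalIntegral.intervalIntegral_pos_of_pos_on
    (intervalIntegrable_rpow_mul (by linarith) (by fun_prop) 0 b)
    (fun x hx => mul_pos (Real.rpow_pos_of_pos hx.1 _) (exp_pos _)) hb

lemma integral_rpow_mul_exp_neg_mul {p b : ℝ} (hb : 0 < b) :
    ∫ x in (0:ℝ)..1, x ^ (p - 1) * exp (-(b * x)) = lGamma p b / b ^ p := by
  have hsubst := intervalIntegral.integral_comp_mul_left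
    (fun s => s ^ (p - 1) * exp (-s)) hb.ne' (a := 0) (b := 1)
  rw [mul_zero, mul_one, smul_eq_mul, ← lGamma] at hsubst
  have hscale : ∫ x in (0:ℝ)..1, (b * x) ^ (p - 1) * exp (-(b * x))
      = b ^ (p - 1) * ∫ x in (0:ℝ)..1, x ^ (p - 1) * exp (-(b * x)) := by
    rw [← intervalIntegral.integral_const_mul]
    refine intervalIntegral.integral_congr fun x hx => ?_
    rw [Set.uIcc_of_le zero_le_one] at hx
    rw [Real.mul_rpow hb.le hx.1, mul_assoc]
  rw [hscale, Real.rpow_sub_one hb.ne'] at hsubst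
  have := Real.rpow_pos_of_pos hb p
  field_simp at hsubst ⊢
  linarith

lemma ofReal_lGamma {p b : ℝ} (hb : 0 ≤ b) : (lGamma p b : ℂ) = Complex.partialGamma p b := by
  rw [lGamma, Complex.partialGamma, ← intervalIntegral.integral_ofReal]
  refine intervalIntegral.integral_congr fun x hx => ?_
  have hx : 0 ≤ x := by
    rw [Set.uIcc_of_le hb] at hx
    exact hx.1
  rw [Complex.ofReal_mul, Complex.ofReal_cpow hx, mul_comm, Complex.ofReal_exp]
  push_cast
  rfl

lemma lGamma_add_one {p b : ℝ} (hp : 0 < p) (hb : 0 ≤ b) :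
    lGamma (p + 1) b = p * lGamma p b - b ^ p * exp (-b) := by
  have hrec := Complex.partialGamma_add_one (s := p) (by simpa using hp) hb
  apply Complex.ofReal_injective
  push_cast at hrec ⊢
  rw [ofReal_lGamma hb, ofReal_lGamma hb, Complex.ofReal_cpow hb, Complex.ofReal_add,
    Complex.ofReal_one, hrec]
  ring

section IncompleteGammaDistribution

variable {a b : ℝ}

lemma igMeasure_density_nonneg (hb : 0 ≤ b) {x : ℝ} (hx : 0 < x) :
    0 ≤ (lGamma a b)⁻¹ * b ^ a * x ^ (a - 1) * exp (-(b * x)) := by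
  have := lGamma_nonneg a hb
  have := Real.rpow_nonneg hb a
  have := Real.rpow_pos_of_pos hx (a - 1)
  positivity

lemma integral_igMeasure (hb : 0 ≤ b) (g : ℝ → ℝ) :
    ∫ x, g x ∂igMeasure a b
      = ∫ x in (0:ℝ)..1, (lGamma a b)⁻¹ * b ^ a * x ^ (a - 1) * exp (-(b * x)) * g x := by
  rw [igMeasure, integral_withDensity_eq_integral_toReal_smul (by fun_prop)
    (ae_of_all _ fun _ => ENNReal.ofReal_lt_top), intervalIntegral.integral_of_le zero_le_one,
    integral_Ioc_eq_integral_Ioo]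
  refine setIntegral_congr_fun measurableSet_Ioo fun x hx => ?_
  rw [ENNReal.toReal_ofReal (igMeasure_density_nonneg hb hx.1), smul_eq_mul]

lemma integrable_igMeasure_iff (hb : 0 ≤ b) {g : ℝ → ℝ} :
    Integrable g (igMeasure a b) ↔ IntervalIntegrable
      (fun x => (lGamma a b)⁻¹ * b ^ a * x ^ (a - 1) * exp (-(b * x)) * g x) volume 0 1 := by
  rw [igMeasure, integrable_withDensity_iff (by fun_prop)
    (ae_of_all _ fun _ => ENNReal.ofReal_lt_top),
    intervalIntegrable_iff_integrableOn_Ioo_of_le zero_le_one]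
  refine integrableOn_congr_fun (fun x hx => ?_) measurableSet_Ioo
  rw [ENNReal.toReal_ofReal (igMeasure_density_nonneg hb hx.1), mul_comm]

lemma integrable_pow_igMeasure (ha : 0 < a) (hb : 0 ≤ b) (m : ℕ) :
    Integrable (fun x => x ^ m) (igMeasure a b) := by
  rw [integrable_igMeasure_iff hb]
  have := intervalIntegrable_rpow_mul (by linarith : -1 < a - 1)
    (by fun_prop : Continuous fun x => exp (-(b * x)) * x ^ m) 0 1
  convert this.const_mul ((lGamma a b)⁻¹ * b ^ a) using 2
  ring

lemma integral_pow_igMeasure (hb : 0 < b) (m : ℕ) :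
    ∫ x, x ^ m ∂igMeasure a b = lGamma (m + a) b / (b ^ m * lGamma a b) := by
  calc ∫ x, x ^ m ∂igMeasure a b
      = (lGamma a b)⁻¹ * b ^ a * ∫ x in (0:ℝ)..1, x ^ ((m + a) - 1) * exp (-(b * x)) := by
        rw [integral_igMeasure hb.le, ← intervalIntegral.integral_const_mul]
        refine intervalIntegral.integral_congr_ae (ae_of_all _ fun x hx => ?_)
        rw [Set.uIoc_of_le zero_le_one] at hx
        rw [show (m : ℝ) + a - 1 = a - 1 + m by ring, Real.rpow_add hx.1, Real.rpow_natCast]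
        ring
    _ = lGamma (m + a) b / (b ^ m * lGamma a b) := by
        rw [integral_rpow_mul_exp_neg_mul hb, Real.rpow_add hb, Real.rpow_natCast]
        have := Real.rpow_pos_of_pos hb a
        field_simp

lemma integral_pow_zero_igMeasure (ha : 0 < a) (hb : 0 < b) :
    ∫ x, x ^ (0 : ℕ) ∂igMeasure a b = 1 := by
  rw [integral_pow_igMeasure hb, Nat.cast_zero, zero_add, pow_zero, one_mul,
    div_self (lGamma_pos ha hb).ne']

lemma integral_pow_succ_igMeasure (ha : 0 < a) (hb : 0 < b) (m : ℕ) :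
    ∫ x, x ^ (m + 1) ∂igMeasure a b
      = (m + a) / b * ∫ x, x ^ m ∂igMeasure a b - b ^ a * exp (-b) / (b * lGamma a b) := by
  rw [integral_pow_igMeasure hb, integral_pow_igMeasure hb, Nat.cast_succ,
    show (m : ℝ) + 1 + a = m + a + 1 by ring, lGamma_add_one (by positivity) hb.le,
    Real.rpow_add hb, Real.rpow_natCast]
  have := lGamma_pos ha hb
  field_simp
  ring

end IncompleteGammaDistribution

section LangmuirIncompleteGammaDistribution

variable {a b : ℝ}

lemma ligPi_nonneg (hb : 0 ≤ b) (hab : a ≤ b) : 0 ≤ ligPi a b := by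
  have := lGamma_nonneg a hb
  have := Real.rpow_nonneg hb a
  have : 0 ≤ b - a := sub_nonneg.2 hab
  unfold ligPi
  positivity

lemma ligPi_le_one (hb : 0 ≤ b) (hab : a ≤ b) : ligPi a b ≤ 1 := by
  have := lGamma_nonneg a hb
  have := Real.rpow_nonneg hb a
  have : 0 ≤ b - a := sub_nonneg.2 hab
  exact div_le_one_of_le₀ (le_add_of_nonneg_right (by positivity)) (by positivity)

lemma ligPi_mul_sub_mul_lGamma (hb : 0 < b) (hab : a ≤ b) :
    ligPi a b * (b - a) * lGamma a b = (1 - ligPi a b) * b ^ a * exp (-b) := by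
  have := lGamma_nonneg a hb.le
  have := Real.rpow_pos_of_pos hb a
  have : 0 ≤ b - a := sub_nonneg.2 hab
  have hden : 0 < b ^ a + lGamma a b * (b - a) * exp b := by positivity
  rw [ligPi, exp_neg]
  field_simp
  ring

lemma integral_pow_ligMeasure (ha : 0 < a) (hb : 0 ≤ b) (hab : a ≤ b) (m : ℕ) :
    ∫ x, x ^ m ∂ligMeasure a b = (1 - ligPi a b) * ∫ x, x ^ m ∂igMeasure a b + ligPi a b := by
  rw [ligMeasure, integral_add_measure
    ((integrable_pow_igMeasure ha hb m).smul_measure ENNReal.ofReal_ne_top)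
    ((integrable_dirac enorm_lt_top).smul_measure ENNReal.ofReal_ne_top),
    integral_smul_measure, integral_smul_measure, integral_dirac,
    ENNReal.toReal_ofReal (sub_nonneg.2 (ligPi_le_one hb hab)),
    ENNReal.toReal_ofReal (ligPi_nonneg hb hab), one_pow, smul_eq_mul, smul_eq_mul, mul_one]

lemma integral_pow_zero_ligMeasure (ha : 0 < a) (hab : a ≤ b) :
    ∫ x, x ^ (0 : ℕ) ∂ligMeasure a b = 1 := by
  have hb := ha.trans_le hab
  rw [integral_pow_ligMeasure ha hb.le hab, integral_pow_zero_igMeasure ha hb]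
  ring

lemma integral_pow_succ_ligMeasure (ha : 0 < a) (hab : a ≤ b) (m : ℕ) :
    ∫ x, x ^ (m + 1) ∂ligMeasure a b
      = (m + a) / b * ∫ x, x ^ m ∂ligMeasure a b - m / b * ligPi a b := by
  have hb := ha.trans_le hab
  rw [integral_pow_ligMeasure ha hb.le hab, integral_pow_ligMeasure ha hb.le hab,
    integral_pow_succ_igMeasure ha hb]
  have := lGamma_pos ha hb
  have key := ligPi_mul_sub_mul_lGamma hb hab
  field_simp
  linear_combination key

end LangmuirIncompleteGammaDistribution

/-- Any real sequence with `μ_0 = 1` satisfying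
`μ_{m+1} = ((m+a)/b) μ_m - (m/b) π_{a,b}` (`b > a > 0`) is exactly the moment sequence of the
Langmuir-incomplete gamma distribution `LIG(a,b)` (in particular it is unique). -/
theorem lig_moment_solution (a b : ℝ) (μ : ℕ → ℝ)
    (ha : 0 < a) (hab : a < b)
    (h0 : μ 0 = 1)
    (hrec : ∀ m : ℕ, μ (m + 1) = ((m + a) / b) * μ m - (m / b) * ligPi a b) :
    ∀ m : ℕ, μ m = ∫ x, x ^ m ∂(ligMeasure a b) := by
  intro m
  induction m with
  | zero => rw [h0, integral_pow_zero_ligMeasure ha hab.le]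
  | succ m ih => rw [hrec m, ih, integral_pow_succ_ligMeasure ha hab.le m]
end
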